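/- arXiv:2309.03366 — 3 statements merged into one kernel-verified Lean document; each statement's English description precedes it below -/
import Mathlib

section
/- Let R be a commutative ring and let pow₁ and pow₂ be two finitely determined power structures on R such that pow₁(1−t, r) = pow₂(1−t, r) for every r ∈ R (i.e. the series (1−t)^r agree for both structures, for all r). Then pow₁ = pow₂, i.e. pow₁(f, r) = pow₂(f, r) for every f ∈ 1 + t·R[[t]] and every r ∈ R. In other words, a finitely determined power structure on R is uniquely determined by the elements (1−t)^{−r} for r ∈ R. -/
open PowerSeries

/-- A power structure on a commutative ring `R`: a map
`(1 + t·R[[t]]) × R → 1 + t·R[[t]]`, `(f, r) ↦ f^r`, satisfying the axioms of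
Gusein-Zade–Luengo–Melle-Hernández.  Property (7) is stated via the substitution
`t ↦ t^i`, realised coefficientwise. -/
structure PowerStructure (R : Type*) [CommRing R] where
  /-- the operation `(f, r) ↦ f^r` -/
  pow : PowerSeries R → R → PowerSeries R
  /-- `f^r` again has constant coefficient `1` -/
  const : ∀ (f : PowerSeries R) (r : R), constantCoeff f = 1 →
    constantCoeff (pow f r) = 1
  /-- (1) `f^0 = 1` -/
  pow_zero' : ∀ f : PowerSeries R, constantCoeff f = 1 → pow f 0 = 1
  /-- (2) `f^1 = f` -/
  pow_one' : ∀ f : PowerSeries R, constantCoeff f = 1 → pow f 1 = f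
  /-- (3) `(f·g)^r = f^r · g^r` -/
  mul_pow' : ∀ (f g : PowerSeries R) (r : R), constantCoeff f = 1 →
    constantCoeff g = 1 → pow (f * g) r = pow f r * pow g r
  /-- (4) `f^{r+s} = f^r · f^s` -/
  pow_add' : ∀ (f : PowerSeries R) (r s : R), constantCoeff f = 1 →
    pow f (r + s) = pow f r * pow f s
  /-- (5) `f^{rs} = (f^r)^s` -/
  pow_mul' : ∀ (f : PowerSeries R) (r s : R), constantCoeff f = 1 →
    pow f (r * s) = pow (pow f r) s
  /-- (6) `(1+t)^m ≡ 1 + m·t (mod t²)` -/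
  pow_one_add_X : ∀ m : R, coeff 0 (pow (1 + X) m) = 1 ∧ coeff 1 (pow (1 + X) m) = m
  /-- (7) if `g(t) = f(t)^m` then `f(t^i)^m = g(t^i)` for every `i > 0` -/
  pow_subst : ∀ (f : PowerSeries R) (m : R) (i : ℕ), 0 < i → constantCoeff f = 1 →
    pow (PowerSeries.mk fun n => if i ∣ n then coeff (n / i) f else 0) m =
      PowerSeries.mk fun n => if i ∣ n then coeff (n / i) (pow f m) else 0

/-- A power structure is finitely determined if for every `N > 0` there is `M > 0`
such that `f^m (mod t^N)` is determined by `m` and `f (mod t^M)`. -/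
def PowerStructure.FinitelyDetermined {R : Type*} [CommRing R] (P : PowerStructure R) : Prop :=
  ∀ N : ℕ, 0 < N → ∃ M : ℕ, 0 < M ∧ ∀ (f g : PowerSeries R) (m : R),
    constantCoeff f = 1 → constantCoeff g = 1 →
    (∀ n < M, coeff n f = coeff n g) →
    ∀ n < N, coeff n (P.pow f m) = coeff n (P.pow g m)

namespace PSUniqueAux

open Finset

variable {R : Type*} [CommRing R]

lemma const_one_sub_X' : constantCoeff (1 - X : PowerSeries R) = 1 := by simp

lemma const_one_sub_X_pow (k : ℕ) (hk : 0 < k) : constantCoeff (1 - X ^ k : PowerSeries R) = 1 := by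
  simp [constantCoeff_X, zero_pow hk.ne']

lemma one_sub_X_pow_eq (k : ℕ) (hk : 0 < k) :
    (1 - X ^ k : PowerSeries R) =
      PowerSeries.mk fun n => if k ∣ n then coeff (n / k) (1 - X) else 0 := by
  ext n
  simp only [coeff_mk, map_sub, coeff_one, coeff_X_pow, coeff_X]
  by_cases hdvd : k ∣ n
  · simp only [hdvd, if_true]
    obtain ⟨c, rfl⟩ := hdvd
    rw [Nat.mul_div_cancel_left c hk]
    by_cases hc0 : c = 0
    · subst hc0; simp [hk.ne', eq_comm]
    by_cases hc1 : c = 1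
    · subst hc1; simp [hk.ne', hc0]
    · have hne0 : k * c ≠ 0 := Nat.mul_ne_zero hk.ne' hc0
      have hnek : k * c ≠ k := fun hh =>
        hc1 (Nat.eq_of_mul_eq_mul_left hk (by rw [hh, mul_one]))
      simp [hne0, hnek, hc0, hc1]
  · have h0 : n ≠ 0 := by rintro rfl; exact hdvd (dvd_zero k)
    have h1 : n ≠ k := by rintro rfl; exact hdvd dvd_rfl
    simp [hdvd, h0, h1]

lemma pow_one_sub_X_pow (P : PowerStructure R) (k : ℕ) (hk : 0 < k) (r : R) :
    P.pow (1 - X ^ k) r =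
      PowerSeries.mk fun n => if k ∣ n then coeff (n / k) (P.pow (1 - X) r) else 0 := by
  rw [one_sub_X_pow_eq k hk]
  exact P.pow_subst (1 - X) r k hk const_one_sub_X'

lemma coeff_one_pow_one_sub_X (P : PowerStructure R) (m : R) :
    coeff 1 (P.pow (1 - X) m) = -m := by
  have hmul : ((1 : PowerSeries R) + X) * (1 - X) = 1 - X ^ 2 := by ring
  have hp := P.mul_pow' (1 + X) (1 - X) m (by simp) (by simp)
  rw [hmul] at hp
  have hc1 : coeff 1 (P.pow (1 - X ^ 2) m) = 0 := by
    rw [pow_one_sub_X_pow P 2 (by norm_num) m]; norm_num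
  rw [hp, coeff_one_mul] at hc1
  have e1 : coeff 1 (P.pow (1 + X) m) = m := (P.pow_one_add_X m).2
  have e0 : constantCoeff (P.pow (1 + X) m) = 1 := by
    have := (P.pow_one_add_X m).1
    rwa [coeff_zero_eq_constantCoeff] at this
  have e2 : constantCoeff (P.pow (1 - X) m) = 1 := P.const _ m const_one_sub_X'
  rw [e1, e0, e2] at hc1
  linear_combination hc1

lemma coeff_pow_one_sub_X_pow_of_lt (P : PowerStructure R) (k : ℕ) (hk : 0 < k) (r : R)
    (j : ℕ) (hj0 : 0 < j) (hjk : j < k) : coeff j (P.pow (1 - X ^ k) r) = 0 := by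
  rw [pow_one_sub_X_pow P k hk r, coeff_mk]
  have : ¬ k ∣ j := fun hd => absurd (Nat.le_of_dvd hj0 hd) (not_le.mpr hjk)
  simp [this]

lemma coeff_pow_one_sub_X_pow_self (P : PowerStructure R) (k : ℕ) (hk : 0 < k) (r : R) :
    coeff k (P.pow (1 - X ^ k) r) = -r := by
  rw [pow_one_sub_X_pow P k hk r, coeff_mk]
  simp [Nat.div_self hk, coeff_one_pow_one_sub_X]

lemma coeff_mul_lt (g E : PowerSeries R) (k n : ℕ) (hn : n < k)
    (hE : ∀ j, 0 < j → j < k → coeff j E = 0) (hE0 : constantCoeff E = 1) :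
    coeff n (g * E) = coeff n g := by
  rw [coeff_mul, Finset.sum_eq_single (n, 0)]
  · simp only [coeff_zero_eq_constantCoeff, hE0, mul_one]
  · rintro ⟨i, j⟩ hmem hne
    rw [Finset.HasAntidiagonal.mem_antidiagonal] at hmem
    have hj : 0 < j := by
      rcases Nat.eq_zero_or_pos j with hj0 | hj0
      · exact absurd (by simp [hj0]; omega : (i, j) = (n, 0)) hne
      · exact hj0
    rw [hE j hj (by omega), mul_zero]
  · intro hmem
    exact absurd (Finset.HasAntidiagonal.mem_antidiagonal.mpr (by simp)) hmem

lemma coeff_mul_self (g E : PowerSeries R) (k : ℕ) (hk : 0 < k)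
    (hE : ∀ j, 0 < j → j < k → coeff j E = 0) (hE0 : constantCoeff E = 1)
    (hg0 : constantCoeff g = 1) :
    coeff k (g * E) = coeff k g + coeff k E := by
  rw [coeff_mul]
  have hsub : ({(k, 0), (0, k)} : Finset (ℕ × ℕ)) ⊆ Finset.HasAntidiagonal.antidiagonal k := by
    intro p hp
    rw [Finset.mem_insert, Finset.mem_singleton] at hp
    rcases hp with rfl | rfl <;> simp
  rw [← Finset.sum_subset hsub]
  · rw [Finset.sum_pair (by simp [hk.ne'] : ((k, 0) : ℕ × ℕ) ≠ (0, k))]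
    simp only [coeff_zero_eq_constantCoeff, hE0, hg0, mul_one, one_mul]
  · rintro ⟨i, j⟩ hmem hnot
    rw [Finset.HasAntidiagonal.mem_antidiagonal] at hmem
    rw [Finset.mem_insert, Finset.mem_singleton] at hnot
    push_neg at hnot
    have hj : 0 < j := by
      rcases Nat.eq_zero_or_pos j with hj0 | hj0
      · exact absurd (by simp [hj0]; omega : (i, j) = (k, 0)) hnot.1
      · exact hj0
    have hjk : j < k := by
      rcases lt_or_ge j k with hh | hh
      · exact hh
      · exact absurd (by simp; omega : (i, j) = (0, k)) hnot.2
    rw [hE j hj hjk, mul_zero]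

lemma pow_one_series (P : PowerStructure R) (r : R) : P.pow 1 r = 1 := by
  have := P.pow_mul' (1 - X) 0 r const_one_sub_X'
  rw [zero_mul, P.pow_zero' _ const_one_sub_X'] at this
  exact this.symm

lemma pow_one_sub_X_pow_agree (P₁ P₂ : PowerStructure R)
    (h : ∀ r : R, P₁.pow (1 - X) r = P₂.pow (1 - X) r) (k : ℕ) (hk : 0 < k) (a : R) :
    P₁.pow (1 - X ^ k) a = P₂.pow (1 - X ^ k) a := by
  rw [pow_one_sub_X_pow P₁ k hk a, pow_one_sub_X_pow P₂ k hk a, h a]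

noncomputable def approx (P : PowerStructure R) (f : PowerSeries R) : ℕ → PowerSeries R
  | 0 => 1
  | m + 1 => approx P f m *
      P.pow (1 - X ^ (m + 1)) (coeff (m + 1) (approx P f m) - coeff (m + 1) f)

lemma const_approx (P : PowerStructure R) (f : PowerSeries R) (m : ℕ) :
    constantCoeff (approx P f m) = 1 := by
  induction m with
  | zero => simp [approx]
  | succ m ih =>
    rw [approx, map_mul, ih, one_mul]
    exact P.const _ _ (const_one_sub_X_pow (m + 1) (Nat.succ_pos m))

lemma coeff_approx (P : PowerStructure R) (f : PowerSeries R)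
    (hf : constantCoeff f = 1) (m : ℕ) :
    ∀ n ≤ m, coeff n (approx P f m) = coeff n f := by
  induction m with
  | zero =>
    intro n hn
    obtain rfl : n = 0 := Nat.le_zero.mp hn
    simp [approx, coeff_zero_eq_constantCoeff, hf]
  | succ m ih =>
    intro n hn
    set a := coeff (m + 1) (approx P f m) - coeff (m + 1) f with ha
    have hE : ∀ j, 0 < j → j < m + 1 → coeff j (P.pow (1 - X ^ (m + 1)) a) = 0 :=
      fun j h1 h2 => coeff_pow_one_sub_X_pow_of_lt P (m + 1) (Nat.succ_pos m) a j h1 h2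
    have hE0 : constantCoeff (P.pow (1 - X ^ (m + 1)) a) = 1 :=
      P.const _ _ (const_one_sub_X_pow (m + 1) (Nat.succ_pos m))
    rcases Nat.lt_or_ge n (m + 1) with hlt | hge
    · rw [approx, coeff_mul_lt _ _ (m + 1) n hlt hE hE0]
      exact ih n (by omega)
    · obtain rfl : n = m + 1 := by omega
      rw [approx, coeff_mul_self _ _ (m + 1) (Nat.succ_pos m) hE hE0 (const_approx P f m),
        coeff_pow_one_sub_X_pow_self P (m + 1) (Nat.succ_pos m) a]
      ring

lemma pow_approx_agree (P₁ P₂ : PowerStructure R)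
    (h : ∀ r : R, P₁.pow (1 - X) r = P₂.pow (1 - X) r) (f : PowerSeries R) (m : ℕ) (r : R) :
    P₁.pow (approx P₁ f m) r = P₂.pow (approx P₁ f m) r := by
  induction m with
  | zero => rw [show approx P₁ f 0 = 1 from rfl, pow_one_series, pow_one_series]
  | succ m ih =>
    set a := coeff (m + 1) (approx P₁ f m) - coeff (m + 1) f with ha
    have hk : 0 < m + 1 := Nat.succ_pos m
    have hcE : constantCoeff (P₁.pow (1 - X ^ (m + 1)) a) = 1 :=
      P₁.const _ _ (const_one_sub_X_pow (m + 1) hk)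
    have hEagree : P₁.pow (P₁.pow (1 - X ^ (m + 1)) a) r
        = P₂.pow (P₁.pow (1 - X ^ (m + 1)) a) r := by
      rw [← P₁.pow_mul' _ a r (const_one_sub_X_pow (m + 1) hk),
        pow_one_sub_X_pow_agree P₁ P₂ h (m + 1) hk,
        P₂.pow_mul' _ a r (const_one_sub_X_pow (m + 1) hk),
        ← pow_one_sub_X_pow_agree P₁ P₂ h (m + 1) hk]
    rw [approx, P₁.mul_pow' _ _ r (const_approx P₁ f m) hcE,
      P₂.mul_pow' _ _ r (const_approx P₁ f m) hcE, ih, hEagree]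

end PSUniqueAux

/-- A finitely determined power structure on `R` is uniquely determined by the
series `(1−t)^r` for `r ∈ R`: two finitely determined power structures agreeing on
`(1−t, r)` for all `r` agree on every `f ∈ 1 + t·R[[t]]` and every `r ∈ R`. -/
theorem powerStructure_unique_of_one_sub_X {R : Type*} [CommRing R]
    (P₁ P₂ : PowerStructure R)
    (h₁ : P₁.FinitelyDetermined) (h₂ : P₂.FinitelyDetermined)
    (h : ∀ r : R, P₁.pow (1 - X) r = P₂.pow (1 - X) r) :
    ∀ (f : PowerSeries R) (r : R), constantCoeff f = 1 → P₁.pow f r = P₂.pow f r := by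
  intro f r hf
  ext n
  obtain ⟨M₁, hM₁pos, hM₁⟩ := h₁ (n + 1) (Nat.succ_pos n)
  obtain ⟨M₂, hM₂pos, hM₂⟩ := h₂ (n + 1) (Nat.succ_pos n)
  set M := max M₁ M₂ with hM
  set g := PSUniqueAux.approx P₁ f M with hg
  have hgc : constantCoeff g = 1 := PSUniqueAux.const_approx P₁ f M
  have hagree : ∀ k ≤ M, coeff k f = coeff k g :=
    fun k hk => (PSUniqueAux.coeff_approx P₁ f hf M k hk).symm
  have e1 : coeff n (P₁.pow f r) = coeff n (P₁.pow g r) :=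
    hM₁ f g r hf hgc (fun k hk => hagree k (by omega)) n (Nat.lt_succ_self n)
  have e2 : P₁.pow g r = P₂.pow g r := PSUniqueAux.pow_approx_agree P₁ P₂ h f M r
  have e3 : coeff n (P₂.pow f r) = coeff n (P₂.pow g r) :=
    hM₂ f g r hf hgc (fun k hk => hagree k (by omega)) n (Nat.lt_succ_self n)
  rw [e1, e2, ← e3]
end

section
/- Let R and R' be commutative rings each equipped with a finitely determined power structure, and let φ: R → R' be a ring homomorphism (extended coefficientwise to a map R[[t]] → R'[[t]]) such that φ((1−t)^{−a}) = (1−t)^{−φ(a)} for every a ∈ R. Then φ respects the power structures: φ(f^a) = (φ(f))^{φ(a)} for every f ∈ 1 + t·R[[t]] and every a ∈ R. -/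
open PowerSeries

section Aux
variable {R : Type*} [CommRing R]

lemma aux_const_one_sub_X : constantCoeff (1 - X : PowerSeries R) = 1 := by simp

lemma aux_const_one_sub_X_pow (i : ℕ) (hi : 0 < i) : constantCoeff (1 - X ^ i : PowerSeries R) = 1 := by
  simp [constantCoeff_X, zero_pow hi.ne']

lemma aux_mk_subst (i : ℕ) (hi : 0 < i) :
    (PowerSeries.mk fun n => if i ∣ n then coeff (n / i) (1 - X : PowerSeries R) else 0) = 1 - X ^ i := by
  ext n
  rw [coeff_mk]
  simp only [map_sub, coeff_X_pow, coeff_one, PowerSeries.coeff_X]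
  by_cases hd : i ∣ n
  · obtain ⟨c, rfl⟩ := hd
    rw [if_pos ⟨c, rfl⟩, Nat.mul_div_cancel_left c hi]
    rcases Nat.eq_zero_or_pos c with rfl | hc
    · simp [hi.ne]
    · have hc0 : c ≠ 0 := hc.ne'
      have h1 : i * c ≠ 0 := by positivity
      by_cases hc1 : c = 1
      · subst hc1; simp [hi.ne']
      · have hne : i * c ≠ i := fun he =>
          hc1 (Nat.eq_of_mul_eq_mul_left hi (by omega))
        rw [if_neg hc0, if_neg hc1, if_neg h1, if_neg hne]
  · have hn0 : n ≠ 0 := fun h => hd (h ▸ dvd_zero i)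
    have hni : n ≠ i := fun h => hd (h ▸ dvd_refl i)
    rw [if_neg hd, if_neg hn0, if_neg hni, sub_zero]

lemma aux_coeff_mul_lt (A B : PowerSeries R) (j : ℕ) (hB0 : coeff 0 B = 1)
    (hB : ∀ q, 0 < q → q ≤ j → coeff q B = 0) : coeff j (A * B) = coeff j A := by
  rw [coeff_mul]
  rw [Finset.sum_eq_single (j, 0)]
  · simp [hB0]
  · rintro ⟨p, q⟩ hpq hne
    rw [Finset.HasAntidiagonal.mem_antidiagonal] at hpq
    have hq : 0 < q := by
      rcases Nat.eq_zero_or_pos q with rfl | h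
      · exact absurd (by rw [Prod.mk.injEq]; omega) hne
      · exact h
    rw [hB q hq (by omega), mul_zero]
  · intro hmem
    exact absurd (Finset.HasAntidiagonal.mem_antidiagonal.2 (by simp)) hmem

lemma aux_coeff_mul_at (A B : PowerSeries R) (k : ℕ) (hk : 0 < k) (hB0 : coeff 0 B = 1)
    (hB : ∀ q, 0 < q → q < k → coeff q B = 0) :
    coeff k (A * B) = coeff k A + coeff 0 A * coeff k B := by
  rw [coeff_mul]
  rw [Finset.sum_eq_add_of_mem (k, 0) (0, k)
    (Finset.HasAntidiagonal.mem_antidiagonal.2 (by simp)) (Finset.HasAntidiagonal.mem_antidiagonal.2 (by simp))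
    (by simp [hk.ne'])]
  · simp [hB0]
  · rintro ⟨p, q⟩ hpq ⟨h1, h2⟩
    rw [Finset.HasAntidiagonal.mem_antidiagonal] at hpq
    have hq0 : q ≠ 0 := by rintro rfl; exact h1 (by rw [Prod.mk.injEq]; omega)
    have hqk : q ≠ k := by rintro rfl; exact h2 (by rw [Prod.mk.injEq]; omega)
    rw [hB q (by omega) (by omega), mul_zero]

lemma aux_const_map {R' : Type*} [CommRing R'] (φ : R →+* R') (g : PowerSeries R)
    (hg : constantCoeff g = 1) : constantCoeff (PowerSeries.map φ g) = 1 := by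
  rw [← coeff_zero_eq_constantCoeff, coeff_map, coeff_zero_eq_constantCoeff, hg, map_one]

end Aux

namespace PowerStructure
variable {R : Type*} [CommRing R] (P : PowerStructure R)

lemma pow_one_eq (a : R) : P.pow 1 a = 1 := by
  have h0 : constantCoeff (1 : PowerSeries R) = 1 := by simp
  have h := P.pow_mul' 1 0 a h0
  rw [zero_mul, P.pow_zero' 1 h0] at h
  exact h.symm

lemma pow_one_sub_X_pow (i : ℕ) (hi : 0 < i) (m : R) :
    P.pow (1 - X ^ i) m =
      PowerSeries.mk fun n => if i ∣ n then coeff (n / i) (P.pow (1 - X) m) else 0 := by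
  rw [← aux_mk_subst i hi]
  exact P.pow_subst (1 - X) m i hi aux_const_one_sub_X

lemma coeff_one_pow_one_sub_X (m : R) : coeff 1 (P.pow (1 - X) m) = -m := by
  have hmul : ((1 : PowerSeries R) + X) * (1 - X) = 1 - X ^ 2 := by ring
  have h3 := P.mul_pow' (1 + X) (1 - X) m (by simp) aux_const_one_sub_X
  rw [hmul] at h3
  have hL : coeff 1 (P.pow (1 - X ^ 2) m) = 0 := by
    rw [P.pow_one_sub_X_pow 2 (by norm_num) m, coeff_mk]
    norm_num
  have hB0 : coeff 0 (P.pow (1 - X) m) = 1 := by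
    rw [coeff_zero_eq_constantCoeff]
    exact P.const _ _ aux_const_one_sub_X
  have hR := aux_coeff_mul_at (P.pow (1 + X) m) (P.pow (1 - X) m) 1 one_pos hB0
    (fun q hq hq1 => absurd hq1 (by omega))
  rw [h3, hR, (P.pow_one_add_X m).1, (P.pow_one_add_X m).2, one_mul] at hL
  linear_combination hL

/-- `E i b = (1 - t^i)^{-b}`. -/
noncomputable def E (i : ℕ) (b : R) : PowerSeries R := P.pow (1 - X ^ i) (-b)

lemma coeff_E_zero (i : ℕ) (hi : 0 < i) (b : R) : coeff 0 (P.E i b) = 1 := by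
  rw [coeff_zero_eq_constantCoeff]
  exact P.const _ _ (aux_const_one_sub_X_pow i hi)

lemma const_E (i : ℕ) (hi : 0 < i) (b : R) : constantCoeff (P.E i b) = 1 :=
  P.const _ _ (aux_const_one_sub_X_pow i hi)

lemma coeff_E_lt (i : ℕ) (hi : 0 < i) (b : R) (j : ℕ) (hj0 : 0 < j) (hji : j < i) :
    coeff j (P.E i b) = 0 := by
  rw [E, P.pow_one_sub_X_pow i hi, coeff_mk, if_neg]
  intro hd
  exact absurd (Nat.le_of_dvd hj0 hd) (by omega)

lemma coeff_E_self (i : ℕ) (hi : 0 < i) (b : R) : coeff i (P.E i b) = b := by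
  rw [E, P.pow_one_sub_X_pow i hi, coeff_mk, if_pos (dvd_refl i), Nat.div_self hi,
    P.coeff_one_pow_one_sub_X, neg_neg]

/-- partial product approximation of `f` by products of `E i b`. -/
noncomputable def approx (f : PowerSeries R) : ℕ → PowerSeries R
  | 0 => 1
  | n + 1 => approx f n * P.E (n + 1) (coeff (n + 1) f - coeff (n + 1) (approx f n))

@[simp] lemma approx_zero (f : PowerSeries R) : P.approx f 0 = 1 := rfl

lemma approx_succ (f : PowerSeries R) (n : ℕ) :
    P.approx f (n + 1) =
      P.approx f n * P.E (n + 1) (coeff (n + 1) f - coeff (n + 1) (P.approx f n)) := rfl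

lemma const_approx (f : PowerSeries R) (n : ℕ) : constantCoeff (P.approx f n) = 1 := by
  induction n with
  | zero => simp
  | succ n ih => rw [approx_succ, map_mul, ih, P.const_E (n + 1) n.succ_pos, one_mul]

lemma coeff_approx (f : PowerSeries R) (hf : constantCoeff f = 1) (n : ℕ) :
    ∀ j ≤ n, coeff j (P.approx f n) = coeff j f := by
  induction n with
  | zero =>
    intro j hj
    interval_cases j
    simp [coeff_zero_eq_constantCoeff, hf]
  | succ n ih =>
    intro j hj
    rcases Nat.lt_or_ge j (n + 1) with hjn | hjn
    · rw [approx_succ, aux_coeff_mul_lt _ _ j (P.coeff_E_zero (n + 1) n.succ_pos _)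
        (fun q hq hqj => P.coeff_E_lt (n + 1) n.succ_pos _ q hq (by omega))]
      exact ih j (by omega)
    · have hj1 : j = n + 1 := by omega
      subst hj1
      rw [approx_succ, aux_coeff_mul_at _ _ (n + 1) n.succ_pos
        (P.coeff_E_zero (n + 1) n.succ_pos _)
        (fun q hq hqj => P.coeff_E_lt (n + 1) n.succ_pos _ q hq hqj),
        P.coeff_E_self (n + 1) n.succ_pos, coeff_zero_eq_constantCoeff,
        P.const_approx, one_mul]
      ring

end PowerStructure

section Phi
variable {R R' : Type*} [CommRing R] [CommRing R']
  (P : PowerStructure R) (P' : PowerStructure R') (φ : R →+* R')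

lemma map_E (hφ : ∀ a : R, PowerSeries.map φ (P.pow (1 - X) (-a)) = P'.pow (1 - X) (-(φ a)))
    (i : ℕ) (hi : 0 < i) (b : R) :
    PowerSeries.map φ (P.E i b) = P'.E i (φ b) := by
  rw [PowerStructure.E, PowerStructure.E, P.pow_one_sub_X_pow i hi,
    P'.pow_one_sub_X_pow i hi]
  ext n
  rw [coeff_map, coeff_mk, coeff_mk]
  split_ifs with hd
  · rw [← coeff_map, hφ b]
  · exact map_zero φ

lemma map_pow_approx
    (hφ : ∀ a : R, PowerSeries.map φ (P.pow (1 - X) (-a)) = P'.pow (1 - X) (-(φ a)))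
    (f : PowerSeries R) (a : R) (n : ℕ) :
    PowerSeries.map φ (P.pow (P.approx f n) a) =
      P'.pow (PowerSeries.map φ (P.approx f n)) (φ a) := by
  induction n with
  | zero =>
    rw [PowerStructure.approx_zero, P.pow_one_eq, map_one, P'.pow_one_eq]
  | succ n ih =>
    set b := coeff (n + 1) f - coeff (n + 1) (P.approx f n) with hb
    have hcg : constantCoeff (P.approx f n) = 1 := P.const_approx f n
    have hcE : constantCoeff (P.E (n + 1) b) = 1 := P.const_E (n + 1) n.succ_pos b
    have hstep : P.pow (P.approx f (n + 1)) a
        = P.pow (P.approx f n) a * P.E (n + 1) (b * a) := by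
      rw [P.approx_succ, ← hb, P.mul_pow' _ _ a hcg hcE]
      congr 1
      rw [PowerStructure.E, PowerStructure.E, ← P.pow_mul' _ _ _
        (aux_const_one_sub_X_pow (n + 1) n.succ_pos), neg_mul]
    have hstep' : P'.pow (PowerSeries.map φ (P.approx f (n + 1))) (φ a)
        = P'.pow (PowerSeries.map φ (P.approx f n)) (φ a) * P'.E (n + 1) (φ b * φ a) := by
      have hcg' : constantCoeff (PowerSeries.map φ (P.approx f n)) = 1 :=
        aux_const_map φ _ hcg
      have hcE' : constantCoeff (PowerSeries.map φ (P.E (n + 1) b)) = 1 :=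
        aux_const_map φ _ hcE
      rw [P.approx_succ, ← hb, map_mul, P'.mul_pow' _ _ (φ a) hcg' hcE']
      congr 1
      rw [map_E P P' φ hφ (n + 1) n.succ_pos b, PowerStructure.E, PowerStructure.E,
        ← P'.pow_mul' _ _ _ (aux_const_one_sub_X_pow (n + 1) n.succ_pos), neg_mul]
    rw [hstep, hstep', map_mul, ih, map_E P P' φ hφ (n + 1) n.succ_pos (b * a), map_mul]

end Phi

/-- If `φ : R → R'` is a ring homomorphism between rings with finitely determined
power structures such that `φ((1−t)^{−a}) = (1−t)^{−φ(a)}` for all `a ∈ R` (with `φ`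
applied coefficientwise), then `φ` respects the power structures:
`φ(f^a) = (φ f)^{φ a}` for every `f ∈ 1 + t·R[[t]]` and every `a ∈ R`. -/
theorem powerStructure_respects_of_one_sub_X {R R' : Type*} [CommRing R] [CommRing R']
    (P : PowerStructure R) (P' : PowerStructure R')
    (hP : P.FinitelyDetermined) (hP' : P'.FinitelyDetermined)
    (φ : R →+* R')
    (h : ∀ a : R, PowerSeries.map φ (P.pow (1 - X) (-a)) = P'.pow (1 - X) (-(φ a))) :
    ∀ (f : PowerSeries R) (a : R), constantCoeff f = 1 →
      PowerSeries.map φ (P.pow f a) = P'.pow (PowerSeries.map φ f) (φ a) := by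
  intro f a hf
  ext n
  obtain ⟨M, hM0, hMspec⟩ := hP (n + 1) n.succ_pos
  obtain ⟨M', hM'0, hM'spec⟩ := hP' (n + 1) n.succ_pos
  set K := max M M' with hK
  set g := P.approx f K with hg
  have hcg : constantCoeff g = 1 := P.const_approx f K
  have hagree : ∀ j ≤ K, coeff j g = coeff j f := P.coeff_approx f hf K
  have h1 : coeff n (P.pow f a) = coeff n (P.pow g a) :=
    hMspec f g a hf hcg (fun j hj => (hagree j (by omega)).symm) n (by omega)
  have hcf' : constantCoeff (PowerSeries.map φ f) = 1 := aux_const_map φ f hf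
  have hcg' : constantCoeff (PowerSeries.map φ g) = 1 := aux_const_map φ g hcg
  have h2 : coeff n (P'.pow (PowerSeries.map φ g) (φ a))
      = coeff n (P'.pow (PowerSeries.map φ f) (φ a)) :=
    hM'spec _ _ (φ a) hcg' hcf'
      (fun j hj => by rw [coeff_map, coeff_map, hagree j (by omega)]) n (by omega)
  rw [coeff_map, h1, ← coeff_map, map_pow_approx P P' φ h f a K, h2]
end

section
/- For all a, b, c ∈ k^×, one has ⟨c⟩·(t_a + t_b) = t_{ac} + t_{bc} in W. In particular, ⟨a⟩·t_a = t_a and ⟨a⟩·t_b + ⟨b⟩·t_a = t_a + t_b for all a, b ∈ k^×. Here t_c := ⟨2⟩ + ⟨c⟩ − ⟨1⟩ − ⟨2c⟩. -/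
/-! The doubling relation `⟨x⟩ + ⟨x⟩ = ⟨2x⟩ + ⟨2x⟩` (the case `a = b` of the second family
of relations) shows that every `t_a` is `2`-torsion. Multiplicativity of `⟨·⟩` gives
`⟨c⟩·t_a = t_{ac} − t_c`, and all three identities follow, using `t_{a²} = t_1 = 0`. -/

noncomputable section

/-- The ideal `R` of relations in the group ring `ℤ[k^×]`: generated by the elements
`⟨a⟩ − ⟨ab²⟩` for `a, b ∈ k^×`, and `⟨a⟩ + ⟨b⟩ − ⟨a+b⟩ − ⟨(a+b)ab⟩` for `a, b ∈ k^×`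
with `a + b ≠ 0` (the condition `a + b ≠ 0` being encoded by the existence of a unit
`c` with value `a + b`). -/
def GWIdeal (k : Type*) [Field k] : Ideal (MonoidAlgebra ℤ kˣ) :=
  Ideal.span
    ({x | ∃ a b : kˣ, x = MonoidAlgebra.of ℤ kˣ a - MonoidAlgebra.of ℤ kˣ (a * b ^ 2)} ∪
     {x | ∃ a b c : kˣ, (c : k) = (a : k) + (b : k) ∧
        x = MonoidAlgebra.of ℤ kˣ a + MonoidAlgebra.of ℤ kˣ b
            - MonoidAlgebra.of ℤ kˣ c - MonoidAlgebra.of ℤ kˣ (c * a * b)})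

/-- The Grothendieck–Witt ring of `k`, presented (Lam) as `ℤ[k^×]/R`. -/
abbrev GW (k : Type*) [Field k] := MonoidAlgebra ℤ kˣ ⧸ GWIdeal k

/-- `⟨a⟩`: the class in `W = ℤ[k^×]/R` of the basis element of `a ∈ k^×`. -/
def gw {k : Type*} [Field k] (a : kˣ) : GW k :=
  Ideal.Quotient.mk (GWIdeal k) (MonoidAlgebra.of ℤ kˣ a)

/-- `t_a := ⟨2⟩ + ⟨a⟩ − ⟨1⟩ − ⟨2a⟩ ∈ W` (for `k` of characteristic `≠ 2`, so that
`2` is a unit of `k`). -/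
def tGW {k : Type*} [Field k] (h2 : (2 : k) ≠ 0) (a : kˣ) : GW k :=
  gw (Units.mk0 (2 : k) h2) + gw a - gw 1 - gw (Units.mk0 (2 : k) h2 * a)

end

section GW

variable {k : Type*} [Field k]

lemma gw_mul (a b : kˣ) : gw a * gw b = gw (a * b) := by
  simp only [gw, ← map_mul]

lemma gw_mul_sq (a b : kˣ) : gw (a * b ^ 2) = gw a := by
  refine (Ideal.Quotient.eq.mpr ?_).symm
  exact Ideal.subset_span (Or.inl ⟨a, b, rfl⟩)

lemma gw_add_gw {a b c : kˣ} (h : (c : k) = a + b) :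
    gw a + gw b = gw c + gw (c * a * b) := by
  simp only [gw, ← map_add]
  refine Ideal.Quotient.eq.mpr ?_
  rw [← sub_sub]
  exact Ideal.subset_span (Or.inr ⟨a, b, c, h, rfl⟩)

lemma gw_add_self (h2 : (2 : k) ≠ 0) (x : kˣ) :
    gw x + gw x = gw (Units.mk0 2 h2 * x) + gw (Units.mk0 2 h2 * x) := by
  have hx : ((Units.mk0 2 h2 * x : kˣ) : k) = x + x := by simp [two_mul]
  rw [gw_add_gw hx, mul_assoc, ← sq, gw_mul_sq]

variable (h2 : (2 : k) ≠ 0)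

lemma tGW_mul_sq (a b : kˣ) : tGW h2 (a * b ^ 2) = tGW h2 a := by
  rw [tGW, tGW, gw_mul_sq, ← mul_assoc, gw_mul_sq]

lemma tGW_one : tGW h2 1 = 0 := by
  simp only [tGW, mul_one]
  abel

lemma tGW_mul_self (a : kˣ) : tGW h2 (a * a) = 0 := by
  rw [← one_mul (a * a), ← sq, tGW_mul_sq, tGW_one]

lemma tGW_add_self (a : kˣ) : tGW h2 a + tGW h2 a = 0 := by
  have h1 := gw_add_self h2 1
  have ha := gw_add_self h2 a
  rw [mul_one] at h1
  simp only [tGW]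
  linear_combination ha - h1

lemma neg_tGW (a : kˣ) : -tGW h2 a = tGW h2 a :=
  neg_eq_of_add_eq_zero_left (tGW_add_self h2 a)

lemma gw_mul_tGW (a c : kˣ) : gw c * tGW h2 a = tGW h2 (a * c) - tGW h2 c := by
  have hc (x : kˣ) : gw c * gw x = gw (x * c) := by rw [gw_mul, mul_comm]
  have hc1 := hc 1
  have hc2a := hc (Units.mk0 2 h2 * a)
  rw [one_mul] at hc1
  rw [mul_assoc] at hc2a
  simp only [tGW]
  linear_combination hc (Units.mk0 2 h2) + hc a - hc1 - hc2a

end GW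

/-- For all `a, b, c ∈ k^×`, `⟨c⟩·(t_a + t_b) = t_{ac} + t_{bc}` in `W`; in particular
`⟨a⟩·t_a = t_a` and `⟨a⟩·t_b + ⟨b⟩·t_a = t_a + t_b`. -/
theorem gw_mul_tGW_add {k : Type*} [Field k] (h2 : (2 : k) ≠ 0) :
    (∀ a b c : kˣ, gw c * (tGW h2 a + tGW h2 b) = tGW h2 (a * c) + tGW h2 (b * c)) ∧
    (∀ a : kˣ, gw a * tGW h2 a = tGW h2 a) ∧
    (∀ a b : kˣ, gw a * tGW h2 b + gw b * tGW h2 a = tGW h2 a + tGW h2 b) := by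
  refine ⟨fun a b c => ?_, fun a => ?_, fun a b => ?_⟩
  · rw [mul_add, gw_mul_tGW, gw_mul_tGW]
    linear_combination -tGW_add_self h2 c
  · rw [gw_mul_tGW, tGW_mul_self, zero_sub, neg_tGW]
  · rw [gw_mul_tGW, gw_mul_tGW, mul_comm b a]
    linear_combination tGW_add_self h2 (a * b) - tGW_add_self h2 a - tGW_add_self h2 b
end
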